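/- arXiv:1702.04206 — 3 statements merged into one kernel-verified Lean document; each statement's English description precedes it below -/
import Mathlib

section
/- Let M ∈ rep(C_r) be an indecomposable representation of the universal covering quiver C_r of Γ_r (r ≥ 3) and set N := π_λ(M). Then the following are equivalent: (a) N has the equal kernels property; (b) N(γ_i) is injective for all i ∈ {1,…,r}; (c) M ∈ Inj, i.e. M(δ) is injective for every arrow δ of C_r. -/
open DirectSum

/-!
# Shared framework

Concrete finite-dimensional representations of the generalized Kronecker quiver `Γ_r`
(`KRep`) and of its universal covering quiver `C_r` (an `r`-regular tree with bipartite
orientation, `CrQuiver`/`CrRep`), together with an abstract layer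
(`KroneckerAR`, `CoverAR`) for the Auslander–Reiten-theoretic notions
(AR translate, components, quasi-simplicity, quasi-length, preprojective/preinjective
representations) that are not available in Mathlib.
-/

/-! ## Representations of the generalized Kronecker quiver `Γ_r` -/

/-- A finite-dimensional representation of the `r`-Kronecker quiver `Γ_r`
(two vertices `1, 2` and `r` arrows `γ_1, …, γ_r : 1 → 2`) over `k`. -/
structure KRep (k : Type) [Field k] (r : ℕ) where
  V1 : Type
  V2 : Type
  [a1 : AddCommGroup V1]
  [a2 : AddCommGroup V2]
  [m1 : Module k V1]
  [m2 : Module k V2]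
  [f1 : FiniteDimensional k V1]
  [f2 : FiniteDimensional k V2]
  map : Fin r → V1 →ₗ[k] V2

attribute [instance] KRep.a1 KRep.a2 KRep.m1 KRep.m2 KRep.f1 KRep.f2

namespace KRep

variable {k : Type} [Field k] {r : ℕ}

/-- Morphisms of representations of `Γ_r`. -/
structure Hom (M N : KRep k r) where
  f1 : M.V1 →ₗ[k] N.V1
  f2 : M.V2 →ₗ[k] N.V2
  comm : ∀ i, (N.map i).comp f1 = f2.comp (M.map i)

/-- Isomorphisms of representations of `Γ_r`. -/
structure Iso (M N : KRep k r) where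
  e1 : M.V1 ≃ₗ[k] N.V1
  e2 : M.V2 ≃ₗ[k] N.V2
  comm : ∀ i, (N.map i).comp (e1 : M.V1 →ₗ[k] N.V1) = (e2 : M.V2 →ₗ[k] N.V2).comp (M.map i)

/-- `M` is indecomposable: it is nonzero and its endomorphism ring has no nontrivial
idempotents. -/
def Indec (M : KRep k r) : Prop :=
  ((∃ v : M.V1, v ≠ 0) ∨ (∃ v : M.V2, v ≠ 0)) ∧
  ∀ f : Hom M M, f.f1.comp f.f1 = f.f1 → f.f2.comp f.f2 = f.f2 →
    (f.f1 = 0 ∧ f.f2 = 0) ∨ (f.f1 = LinearMap.id ∧ f.f2 = LinearMap.id)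

/-- `rad(M, N) ≠ 0`: there is a nonzero non-invertible homomorphism `M → N`. -/
def radNe (M N : KRep k r) : Prop :=
  ∃ f : Hom M N, (f.f1 ≠ 0 ∨ f.f2 ≠ 0) ∧
    ¬ (Function.Bijective f.f1 ∧ Function.Bijective f.f2)

/-- The equal kernels property: `M^α = Σ α_i M(γ_i)` is injective for all `α ≠ 0`. -/
def EKP (M : KRep k r) : Prop :=
  ∀ α : Fin r → k, α ≠ 0 → Function.Injective ⇑(∑ i, α i • M.map i)

/-- The equal images property: `M^α = Σ α_i M(γ_i)` is surjective for all `α ≠ 0`. -/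
def EIP (M : KRep k r) : Prop :=
  ∀ α : Fin r → k, α ≠ 0 → Function.Surjective ⇑(∑ i, α i • M.map i)

/-- The dimension vector `(dim_k M_1, dim_k M_2)`. -/
noncomputable def dimVec (M : KRep k r) : ℕ × ℕ := (Module.finrank k M.V1, Module.finrank k M.V2)

/-- The standard duality `D` on `rep(Γ_r)`:
`(DM)_1 = (M_2)^*`, `(DM)_2 = (M_1)^*`, `(DM)(γ_i) = M(γ_i)^*`. -/
noncomputable def dual (M : KRep k r) : KRep k r where
  V1 := Module.Dual k M.V2
  V2 := Module.Dual k M.V1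
  map i := (M.map i).dualMap

/-- The action of an `r × r`-matrix `A` on a representation, corresponding to the pullback
along the algebra homomorphism `φ_A` with `φ_A(γ_j) = Σ_i a_{ij} γ_i`. -/
def glAct (M : KRep k r) (A : Matrix (Fin r) (Fin r) k) : KRep k r where
  V1 := M.V1
  V2 := M.V2
  map j := ∑ i, A i j • M.map i

/-- `M` is `GL_r(k)`-stable: `A.M ≅ M` for every `A ∈ GL_r(k)`, where `A.M` is the pullback
of `M` along `φ_{A⁻¹}`. -/
def GLStable (M : KRep k r) : Prop :=
  ∀ A : GL (Fin r) k,
    Nonempty (Iso (M.glAct ((A⁻¹ : GL (Fin r) k) : Matrix (Fin r) (Fin r) k)) M)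

end KRep

/-! ## Abstract Auslander–Reiten data for `rep(Γ_r)` -/

/-- Abstract Auslander–Reiten-theoretic data for the generalized Kronecker algebra
`K_r = kΓ_r`: the AR translate `τ` (a bijection on regular indecomposables, here recorded
as a permutation of all representations), the classes of preprojective and preinjective
representations, the relation of lying in the same AR component, and quasi-simplicity. -/
structure KroneckerAR (k : Type) [Field k] (r : ℕ) where
  /-- The Auslander–Reiten translate `τ`. -/
  tau : Equiv.Perm (KRep k r)
  /-- `M` lies in the preprojective component `𝒫`. -/
  Preproj : KRep k r → Prop
  /-- `M` lies in one of the preinjective component `ℐ`. -/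
  Preinj : KRep k r → Prop
  /-- `M`, `N` lie in the same component of the AR quiver. -/
  sameComp : KRep k r → KRep k r → Prop
  sameComp_equiv : Equivalence sameComp
  sameComp_tau : ∀ M, sameComp M (tau M)
  /-- `M` is quasi-simple (lies in the bottom layer of a `ℤA∞` component). -/
  quasiSimple : KRep k r → Prop

namespace KroneckerAR

variable {k : Type} [Field k] {r : ℕ}

/-- `M` is regular: neither preprojective nor preinjective. -/
def Regular (S : KroneckerAR k r) (M : KRep k r) : Prop := ¬ S.Preproj M ∧ ¬ S.Preinj M

/-- The regular component containing `X` has width `W(𝒞) = w`: there are quasi-simple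
representations `M_𝒞` and `W_𝒞` in the component of `X` such that the `τ⁻¹`-orbit of `M_𝒞`
consists of `EKP`-representations, `τ M_𝒞 ∉ EKP` (so the cone `(M_𝒞 →)` is `EKP ∩ 𝒞`),
dually the `τ`-orbit of `W_𝒞` consists of `EIP`-representations with `τ⁻¹ W_𝒞 ∉ EIP`
(so `(→ W_𝒞) = EIP ∩ 𝒞`), and `τ^{w+1} M_𝒞 = W_𝒞`. -/
def IsWidth (S : KroneckerAR k r) (X : KRep k r) (w : ℕ) : Prop :=
  ∃ MC WC : KRep k r, S.quasiSimple MC ∧ S.quasiSimple WC ∧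
    S.sameComp X MC ∧ S.sameComp X WC ∧
    (∀ j : ℕ, ((S.tau⁻¹ ^ j) MC).EKP) ∧ ¬ (S.tau MC).EKP ∧
    (∀ j : ℕ, ((S.tau ^ j) WC).EIP) ∧ ¬ (S.tau⁻¹ WC).EIP ∧
    (S.tau ^ (w + 1)) MC = WC

end KroneckerAR
/-! ## The universal covering quiver `C_r` -/

/-- The combinatorial data of a quiver whose underlying graph is `r`-regular and which has
bipartite orientation: a set `Src` of sources, a set `Snk` of sinks, and for each source
(resp. sink) exactly one incident arrow with label (`π`-image) `γ_i` for every `i`;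
`step x i` is the target of the arrow labelled `i` starting at `x`, and `back y i` is the
source of the arrow labelled `i` ending at `y`. -/
structure BipData (r : ℕ) where
  Src : Type
  Snk : Type
  step : Src → Fin r → Snk
  back : Snk → Fin r → Src
  step_back : ∀ y i, step (back y i) i = y
  back_step : ∀ x i, back (step x i) i = x
  step_inj : ∀ x, Function.Injective (step x)
  back_inj : ∀ y, Function.Injective (back y)

/-- The underlying (simple) graph of the quiver. -/
def BipData.graph {r : ℕ} (Q : BipData r) : SimpleGraph (Q.Src ⊕ Q.Snk) where
  Adj a b := (∃ x i, a = Sum.inl x ∧ b = Sum.inr (Q.step x i)) ∨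
             (∃ x i, b = Sum.inl x ∧ a = Sum.inr (Q.step x i))
  symm := by
    constructor
    rintro a b (⟨x, i, h1, h2⟩ | ⟨x, i, h1, h2⟩)
    · exact Or.inr ⟨x, i, h1, h2⟩
    · exact Or.inl ⟨x, i, h1, h2⟩
  loopless := by
    constructor
    rintro a (⟨x, i, h1, h2⟩ | ⟨x, i, h1, h2⟩) <;> (subst h1; simp at h2)

/-- The universal covering quiver `C_r` of `Γ_r`: an `r`-regular tree with bipartite
orientation. -/
structure CrQuiver (r : ℕ) extends BipData r where
  isTree : toBipData.graph.IsTree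

/-! ## Representations of `C_r` -/

/-- A finite-dimensional representation of `C_r` over `k` (finitely supported). -/
structure CrRep (k : Type) [Field k] {r : ℕ} (Q : CrQuiver r) where
  Vs : Q.Src → Type
  Vt : Q.Snk → Type
  [acs : ∀ x, AddCommGroup (Vs x)]
  [mds : ∀ x, Module k (Vs x)]
  [act : ∀ y, AddCommGroup (Vt y)]
  [mdt : ∀ y, Module k (Vt y)]
  [fds : ∀ x, FiniteDimensional k (Vs x)]
  [fdt : ∀ y, FiniteDimensional k (Vt y)]
  map : ∀ (x : Q.Src) (i : Fin r), Vs x →ₗ[k] Vt (Q.step x i)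
  finSupp : {z : Q.Src ⊕ Q.Snk |
      Sum.elim (fun x => ∃ v : Vs x, v ≠ 0) (fun y => ∃ v : Vt y, v ≠ 0) z}.Finite

attribute [instance] CrRep.acs CrRep.mds CrRep.act CrRep.mdt CrRep.fds CrRep.fdt

namespace CrRep

variable {k : Type} [Field k] {r : ℕ} {Q : CrQuiver r}

/-- The support of `M`. -/
def suppSet (M : CrRep k Q) : Set (Q.Src ⊕ Q.Snk) :=
  {z | Sum.elim (fun x => ∃ v : M.Vs x, v ≠ 0) (fun y => ∃ v : M.Vt y, v ≠ 0) z}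

/-- `z` belongs to `T(M)`, the minimal subtree of `C_r` containing the support of `M`:
it lies on a path between two support vertices. -/
def inTree (M : CrRep k Q) (z : Q.Src ⊕ Q.Snk) : Prop :=
  ∃ a ∈ M.suppSet, ∃ b ∈ M.suppSet, ∃ p : Q.toBipData.graph.Walk a b,
    p.IsPath ∧ z ∈ p.support

/-- `z` is a leaf of `M`: a vertex of `T(M)` with at most one neighbour in `T(M)`. -/
def IsLeaf (M : CrRep k Q) (z : Q.Src ⊕ Q.Snk) : Prop :=
  M.inTree z ∧ {w | Q.toBipData.graph.Adj z w ∧ M.inTree w}.Subsingleton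

/-- The dimension of `M` at a vertex. -/
noncomputable def dimAt (M : CrRep k Q) (z : Q.Src ⊕ Q.Snk) : ℕ :=
  Sum.elim (fun x => Module.finrank k (M.Vs x)) (fun y => Module.finrank k (M.Vt y)) z

/-- All structure maps of `M` are injective (the class `Inj`). -/
def AllInj (M : CrRep k Q) : Prop := ∀ x i, Function.Injective ⇑(M.map x i)

/-- All structure maps of `M` are surjective (the class `Sur`). -/
def AllSur (M : CrRep k Q) : Prop := ∀ x i, Function.Surjective ⇑(M.map x i)

end CrRep

/-- Morphisms of representations of `C_r`. -/
structure CrHom {k : Type} [Field k] {r : ℕ} {Q : CrQuiver r} (M N : CrRep k Q) where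
  fs : ∀ x, M.Vs x →ₗ[k] N.Vs x
  ft : ∀ y, M.Vt y →ₗ[k] N.Vt y
  comm : ∀ x i, (ft (Q.step x i)).comp (M.map x i) = (N.map x i).comp (fs x)

/-- A morphism is zero if all its components vanish. -/
def CrHom.IsZero {k : Type} [Field k] {r : ℕ} {Q : CrQuiver r} {M N : CrRep k Q}
    (f : CrHom M N) : Prop :=
  (∀ x, f.fs x = 0) ∧ (∀ y, f.ft y = 0)

/-- Isomorphisms of representations of `C_r`. -/
structure CrIso {k : Type} [Field k] {r : ℕ} {Q : CrQuiver r} (M N : CrRep k Q) where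
  es : ∀ x, M.Vs x ≃ₗ[k] N.Vs x
  et : ∀ y, M.Vt y ≃ₗ[k] N.Vt y
  comm : ∀ x i, ((et (Q.step x i) : M.Vt (Q.step x i) →ₗ[k] N.Vt (Q.step x i))).comp (M.map x i)
      = (N.map x i).comp (es x : M.Vs x →ₗ[k] N.Vs x)

namespace CrRep

variable {k : Type} [Field k] {r : ℕ} {Q : CrQuiver r}

/-- `M` is indecomposable: it is nonzero and its endomorphism ring has no nontrivial
idempotents. -/
def Indec (M : CrRep k Q) : Prop :=
  M.suppSet.Nonempty ∧
  ∀ f : CrHom M M, (∀ x, (f.fs x).comp (f.fs x) = f.fs x) →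
    (∀ y, (f.ft y).comp (f.ft y) = f.ft y) →
    f.IsZero ∨ ((∀ x, f.fs x = LinearMap.id) ∧ (∀ y, f.ft y = LinearMap.id))

/-- `M` is balanced: indecomposable with a leaf in `C_r^+` (sources) and a leaf in
`C_r^-` (sinks). -/
def Balanced (M : CrRep k Q) : Prop :=
  M.Indec ∧ (∃ x : Q.Src, M.IsLeaf (Sum.inl x)) ∧ (∃ y : Q.Snk, M.IsLeaf (Sum.inr y))

end CrRep
/-! ## The push-down functor `π_λ : rep(C_r) → rep(Γ_r)` -/

theorem finiteDimensional_directSum {k : Type} [Field k] {ι : Type} (V : ι → Type)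
    [∀ i, AddCommGroup (V i)] [∀ i, Module k (V i)] [∀ i, FiniteDimensional k (V i)]
    (h : {i : ι | ∃ v : V i, v ≠ 0}.Finite) : FiniteDimensional k (⨁ i, V i) := by
  classical
  set s : Finset ι := h.toFinset with hs
  let g : (⨁ i : {j // j ∈ s}, V i.1) →ₗ[k] ⨁ i, V i :=
    DirectSum.toModule k {j // j ∈ s} (⨁ i, V i) fun i => DirectSum.lof k ι V i.1
  have hfd : FiniteDimensional k (⨁ i : {j // j ∈ s}, V i.1) := by
    have e := DirectSum.linearEquivFunOnFintype k {j // j ∈ s} (fun i : {j // j ∈ s} => V i.1)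
    exact Module.Finite.equiv e.symm
  have hsurj : Function.Surjective g := by
    intro m
    induction m using DirectSum.induction_on with
    | zero => exact ⟨0, map_zero g⟩
    | of i x =>
      by_cases hi : i ∈ s
      · refine ⟨DirectSum.lof k {j // j ∈ s} (fun j : {j // j ∈ s} => V j.1) ⟨i, hi⟩ x, ?_⟩
        simp only [g, DirectSum.toModule_lof]
        rw [DirectSum.lof_eq_of]
      · have hx : x = 0 := by
          by_contra hx
          exact hi (by simpa [hs] using ⟨x, hx⟩)
        exact ⟨0, by simp [hx]⟩
    | add a b ha hb =>
      obtain ⟨a', ha'⟩ := ha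
      obtain ⟨b', hb'⟩ := hb
      exact ⟨a' + b', by simp [ha', hb']⟩
  exact Module.Finite.of_surjective g hsurj

namespace CrRep

variable {k : Type} [Field k] {r : ℕ} {Q : CrQuiver r}

/-- The structure map `π_λ(M)(γ_i) = ⊕_{π(β) = γ_i} M(β)` of the push-down. -/
noncomputable def pushMap (M : CrRep k Q) (i : Fin r) :
    (⨁ x, M.Vs x) →ₗ[k] (⨁ y, M.Vt y) := by
  classical
  exact DirectSum.toModule k Q.Src (⨁ y, M.Vt y) fun x =>
    (DirectSum.lof k Q.Snk (fun y => M.Vt y) (Q.step x i)).comp (M.map x i)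

/-- The push-down `π_λ(M)` of a representation of `C_r` along the Galois covering
`π : C_r → Γ_r`. -/
noncomputable def pushdown (M : CrRep k Q) : KRep k r where
  V1 := ⨁ x, M.Vs x
  V2 := ⨁ y, M.Vt y
  f1 := finiteDimensional_directSum (fun x => M.Vs x)
    (M.finSupp.preimage (Set.injOn_of_injective Sum.inl_injective))
  f2 := finiteDimensional_directSum (fun y => M.Vt y)
    (M.finSupp.preimage (Set.injOn_of_injective Sum.inr_injective))
  map := M.pushMap

end CrRep
/-! ## Automorphisms of `C_r` and the actions of `G = π(Γ_r)` and of `S_r` -/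

/-- A quiver automorphism of `C_r` lying over the permutation `σ` of the arrow labels
`γ_1, …, γ_r` of `Γ_r`.  For `σ = 1` these are exactly the deck transformations, i.e.
the elements of the Galois group `G = π(Γ_r)`. -/
structure CrPermAut {r : ℕ} (Q : CrQuiver r) (σ : Equiv.Perm (Fin r)) where
  es : Q.Src ≃ Q.Src
  et : Q.Snk ≃ Q.Snk
  comm : ∀ x i, Q.step (es x) (σ i) = et (Q.step x i)

/-- An element of the Galois group `G = π(Γ_r)`, acting on `C_r` as a label-preserving
quiver automorphism. -/
abbrev CrAut {r : ℕ} (Q : CrQuiver r) := CrPermAut Q (1 : Equiv.Perm (Fin r))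

/-- The induced permutation of the vertex set. -/
def CrPermAut.onV {r : ℕ} {Q : CrQuiver r} {σ : Equiv.Perm (Fin r)} (φ : CrPermAut Q σ) :
    (Q.Src ⊕ Q.Snk) ≃ (Q.Src ⊕ Q.Snk) :=
  Equiv.sumCongr φ.es φ.et

namespace CrRep

variable {k : Type} [Field k] {r : ℕ} {Q : CrQuiver r}

/-- The twist `σ(M)^g` of a representation by an automorphism `φ` of `C_r` lying over
`σ`:  `(M^φ)_x = M_{φ(x)}` and `(M^φ)(α) = M(φ(α))`.  For `σ = 1` this is the shift
`M ↦ M^g` by an element `g` of the Galois group `G`. -/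
noncomputable def twist (M : CrRep k Q) {σ : Equiv.Perm (Fin r)} (φ : CrPermAut Q σ) :
    CrRep k Q where
  Vs x := M.Vs (φ.es x)
  Vt y := M.Vt (φ.et y)
  acs := fun x => inferInstance
  mds := fun x => inferInstance
  act := fun y => inferInstance
  mdt := fun y => inferInstance
  fds := fun x => inferInstance
  fdt := fun y => inferInstance
  map x i := by
    show M.Vs (φ.es x) →ₗ[k] M.Vt (φ.et (Q.step x i))
    rw [← φ.comm x i]
    exact M.map (φ.es x) (σ i)
  finSupp := by
    have h := M.finSupp.preimage (Set.injOn_of_injective φ.onV.injective)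
    convert h using 1
    ext z
    cases z <;> rfl

/-- The shift `M ↦ M^g` of a representation by an element of the Galois group. -/
noncomputable def shift (M : CrRep k Q) (g : CrAut Q) : CrRep k Q := M.twist g

end CrRep
/-! ## Leaf-connected pairs and the extension `N ∗_f M` -/

/-- `(N, M)` is leaf-connected with connecting arrow `α : x0 → Q.step x0 i0`:
`x0` is a leaf of `M`, the target of `α` is a leaf of `N` and the supports are disjoint. -/
def LeafConnected {k : Type} [Field k] {r : ℕ} {Q : CrQuiver r} (N M : CrRep k Q)
    (x0 : Q.Src) (i0 : Fin r) : Prop :=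
  M.IsLeaf (Sum.inl x0) ∧ N.IsLeaf (Sum.inr (Q.step x0 i0)) ∧
  M.suppSet ∩ N.suppSet = ∅

namespace CrRep

variable {k : Type} [Field k] {r : ℕ} {Q : CrQuiver r}

/-- The auxiliary "correction" map used to define `N ∗_f M`: it equals
`(m, n) ↦ (0, f m)` along the connecting arrow and `0` along every other arrow. -/
noncomputable def starCorr (N M : CrRep k Q) (x0 : Q.Src) (i0 : Fin r)
    (f : M.Vs x0 →ₗ[k] N.Vt (Q.step x0 i0)) (x : Q.Src) (i : Fin r) :
    (M.Vs x × N.Vs x) →ₗ[k] (M.Vt (Q.step x i) × N.Vt (Q.step x i)) := by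
  classical
  by_cases h : x = x0 ∧ i = i0
  · obtain ⟨h1, h2⟩ := h
    subst h1; subst h2
    exact (LinearMap.inr k (M.Vt (Q.step x i)) (N.Vt (Q.step x i))).comp
      (f.comp (LinearMap.fst k (M.Vs x) (N.Vs x)))
  · exact 0

/-- The extension `N ∗_f M` of `M` by `N` along a connecting map `f`:
it restricts to `M` on `supp M`, to `N` on `supp N`, and has the map `f` along the
connecting arrow. -/
noncomputable def star (N M : CrRep k Q) (x0 : Q.Src) (i0 : Fin r)
    (f : M.Vs x0 →ₗ[k] N.Vt (Q.step x0 i0)) : CrRep k Q where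
  Vs x := M.Vs x × N.Vs x
  Vt y := M.Vt y × N.Vt y
  acs := fun x => inferInstance
  mds := fun x => inferInstance
  act := fun y => inferInstance
  mdt := fun y => inferInstance
  fds := fun x => inferInstance
  fdt := fun y => inferInstance
  map x i := (M.map x i).prodMap (N.map x i) + starCorr N M x0 i0 f x i
  finSupp := by
    refine (M.finSupp.union N.finSupp).subset ?_
    rintro (x | y) hz
    · obtain ⟨v, hv⟩ := hz
      by_cases h1 : v.1 = 0
      · have h2 : v.2 ≠ 0 := fun h2 => hv (Prod.ext h1 h2)
        exact Or.inr ⟨v.2, h2⟩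
      · exact Or.inl ⟨v.1, h1⟩
    · obtain ⟨v, hv⟩ := hz
      by_cases h1 : v.1 = 0
      · have h2 : v.2 ≠ 0 := fun h2 => hv (Prod.ext h1 h2)
        exact Or.inr ⟨v.2, h2⟩
      · exact Or.inl ⟨v.1, h1⟩

end CrRep

/-! ## Small trees, and the representations `X^i` -/

namespace CrRep

variable {k : Type} [Field k] {r : ℕ} {Q : CrQuiver r}

/-- The tree `T(L)` of `L` is small: it has leaves among the sources and among the sinks,
every vertex has at most `3` neighbours in the tree, and two distinct vertices with
exactly `3` neighbours in the tree have distance at least `3`. -/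
def SmallTree (L : CrRep k Q) : Prop :=
  (∃ x : Q.Src, L.IsLeaf (Sum.inl x)) ∧ (∃ y : Q.Snk, L.IsLeaf (Sum.inr y)) ∧
  (∀ z, L.inTree z → {w | Q.toBipData.graph.Adj z w ∧ L.inTree w}.ncard ≤ 3) ∧
  (∀ z w, L.inTree z → L.inTree w →
    {u | Q.toBipData.graph.Adj z u ∧ L.inTree u}.ncard = 3 →
    {u | Q.toBipData.graph.Adj w u ∧ L.inTree u}.ncard = 3 →
    z = w ∨ 3 ≤ Q.toBipData.graph.dist z w)

/-- `X` is (isomorphic to) the representation `X^i` based at the source `x0`: it is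
indecomposable, one-dimensional at `x0` and at the vertices `t(β_j)`, `j ≠ i`,
zero elsewhere, with isomorphisms along all arrows `β_j`, `j ≠ i`. -/
def IsXi (x0 : Q.Src) (i : Fin r) (X : CrRep k Q) : Prop :=
  X.Indec ∧
  (∀ x : Q.Src, (∃ v : X.Vs x, v ≠ 0) ↔ x = x0) ∧
  (∀ y : Q.Snk, (∃ v : X.Vt y, v ≠ 0) ↔ ∃ j : Fin r, j ≠ i ∧ y = Q.step x0 j) ∧
  Module.finrank k (X.Vs x0) = 1 ∧
  (∀ j : Fin r, j ≠ i → Function.Bijective ⇑(X.map x0 j))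

/-- `M` is `S_r`-stable with respect to the choice `Φ` of automorphisms of `C_r` lying
over the permutations `σ ∈ S_r` of the arrows of `Γ_r`: `M ≅ σ(M)^{g_σ}` for all `σ`. -/
def SrStable (M : CrRep k Q) (Φ : ∀ σ : Equiv.Perm (Fin r), CrPermAut Q σ) : Prop :=
  ∀ σ : Equiv.Perm (Fin r), Nonempty (CrIso M (M.twist (Φ σ)))

end CrRep

/-! ## Abstract Auslander–Reiten data for `rep(C_r)` and `rep(Γ_r)` -/

/-- Abstract Auslander–Reiten-theoretic data for the representations of the universal
covering quiver `C_r` and of `Γ_r`: the AR translates, AR components, quasi-simplicity,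
quasi-length, the preprojective/preinjective classes downstairs, cones in a component,
almost split sequences and injectivity of representations of `C_r`. -/
structure CoverAR (k : Type) [Field k] {r : ℕ} (Q : CrQuiver r) where
  /-- The AR translate `τ_{C_r}` of `rep(C_r)`. -/
  tauC : Equiv.Perm (CrRep k Q)
  /-- The AR translate `τ` of `rep(Γ_r)`. -/
  tauK : Equiv.Perm (KRep k r)
  /-- Same AR component in `rep(C_r)`. -/
  sameC : CrRep k Q → CrRep k Q → Prop
  sameC_equiv : Equivalence sameC
  sameC_tau : ∀ M, sameC M (tauC M)
  /-- Same AR component in `rep(Γ_r)`. -/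
  sameK : KRep k r → KRep k r → Prop
  sameK_equiv : Equivalence sameK
  sameK_tau : ∀ M, sameK M (tauK M)
  /-- Quasi-simple in `rep(C_r)`. -/
  qsC : CrRep k Q → Prop
  /-- Quasi-simple in `rep(Γ_r)`. -/
  qsK : KRep k r → Prop
  /-- Quasi-length in `rep(C_r)`. -/
  qlC : CrRep k Q → ℕ
  /-- Preprojective representations of `Γ_r` (the component `𝒫`). -/
  Preproj : KRep k r → Prop
  /-- Preinjective representations of `Γ_r` (the component `ℐ`). -/
  Preinj : KRep k r → Prop
  /-- The cone `(X →)` of successors of `X` in its AR component. -/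
  succConeC : CrRep k Q → Set (CrRep k Q)
  /-- The cone `(→ X)` of predecessors of `X` in its AR component. -/
  predConeC : CrRep k Q → Set (CrRep k Q)
  /-- `ARSeqTriple A B C` : there is an almost split sequence `0 → A → B → C → 0`. -/
  ARSeqTriple : CrRep k Q → CrRep k Q → CrRep k Q → Prop
  /-- `M` is an injective representation of `C_r`. -/
  InjRep : CrRep k Q → Prop

namespace CoverAR

variable {k : Type} [Field k] {r : ℕ} {Q : CrQuiver r}

/-- `M ∈ rep(C_r)` is regular: its push-down `π_λ(M)` is neither preprojective nor
preinjective. -/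
def RegularC (A : CoverAR k Q) (M : CrRep k Q) : Prop :=
  ¬ A.Preproj M.pushdown ∧ ¬ A.Preinj M.pushdown

/-- `N ∈ rep(Γ_r)` is regular. -/
def RegularK (A : CoverAR k Q) (N : KRep k r) : Prop :=
  ¬ A.Preproj N ∧ ¬ A.Preinj N

/-- The regular component `𝒟` of `rep(C_r)` containing `X` has width `W_C(𝒟) = w`:
there are quasi-simple `I_𝒟`, `S_𝒟` in the component of `X` with
`(I_𝒟 →) = Inj ∩ 𝒟` (equivalently: the whole `τ⁻¹`-orbit of `I_𝒟` lies in `Inj`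
while `τ I_𝒟 ∉ Inj`), dually `(→ S_𝒟) = Sur ∩ 𝒟`, and `τ^{w+1} I_𝒟 = S_𝒟`. -/
def IsWidth (A : CoverAR k Q) (X : CrRep k Q) (w : ℕ) : Prop :=
  ∃ I S : CrRep k Q, A.qsC I ∧ A.qsC S ∧ A.sameC X I ∧ A.sameC X S ∧
    (∀ j : ℕ, ((A.tauC⁻¹ ^ j) I).AllInj) ∧ ¬ (A.tauC I).AllInj ∧
    (∀ j : ℕ, ((A.tauC ^ j) S).AllSur) ∧ ¬ (A.tauC⁻¹ S).AllSur ∧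
    (A.tauC ^ (w + 1)) I = S

/-- The regular component of `X ∈ rep(Γ_r)` has width `W(𝒞) = w`
(formulated as in `KroneckerAR.IsWidth`). -/
def IsWidthK (A : CoverAR k Q) (X : KRep k r) (w : ℕ) : Prop :=
  ∃ MC WC : KRep k r, A.qsK MC ∧ A.qsK WC ∧
    A.sameK X MC ∧ A.sameK X WC ∧
    (∀ j : ℕ, ((A.tauK⁻¹ ^ j) MC).EKP) ∧ ¬ (A.tauK MC).EKP ∧
    (∀ j : ℕ, ((A.tauK ^ j) WC).EIP) ∧ ¬ (A.tauK⁻¹ WC).EIP ∧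
    (A.tauK ^ (w + 1)) MC = WC

end CoverAR

/-!
The implications (a) ⇒ (b) ⇒ (c) are immediate: take `α` a unit vector, and restrict
`π_λ(M)(γ_i)` to a summand `M_x`. For (c) ⇒ (a), let `α ≠ 0` and `v ∈ ⊕ₓ M_x` nonzero with finite
support `F`. In the tree `C_r`, take `x ∈ F` farthest from a fixed vertex `z`: at most one
neighbour of `x` is closer to `z`, so some arrow `x → y` with label `i₀`, `α_{i₀} ≠ 0`, leads away
from `z`, and then `x` is the only neighbour of `y` closer to `z`. Hence no other arrow from `F`
with a label in the support of `α` ends at `y`, and the `y`-component of `π_λ(M)^α v` is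
`α_{i₀} M(x → y)(v_x) ≠ 0`.
-/

namespace SimpleGraph

variable {V : Type*} {G : SimpleGraph V}

lemma IsTree.eq_of_adj_of_dist_lt (hG : G.IsTree) {z v u w : V} (hu : G.Adj v u)
    (hw : G.Adj v w) (hdu : G.dist z u < G.dist z v) (hdw : G.dist z w < G.dist z v) :
    u = w := by
  classical
  obtain ⟨p, hp, -⟩ := hG.connected.exists_path_of_dist z v
  have mem_support : ∀ {u}, G.Adj v u → G.dist z u < G.dist z v → u ∈ p.support := by
    intro u hu hdu
    obtain ⟨q, hq, hql⟩ := hG.connected.exists_path_of_dist z u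
    refine hG.isAcyclic.mem_support_of_ne_mem_support_of_adj_of_isPath hp hq hu fun hv => ?_
    have := (dist_le (q.takeUntil v hv)).trans (q.length_takeUntil_le_length hv)
    omega
  rw [hG.isAcyclic.eq_penultimate_of_adj_end hp hu (mem_support hu hdu),
    hG.isAcyclic.eq_penultimate_of_adj_end hp hw (mem_support hw hdw)]

end SimpleGraph

namespace BipData

variable {r : ℕ} (Q : BipData r)

lemma graph_adj_step (x : Q.Src) (i : Fin r) : Q.graph.Adj (Sum.inl x) (Sum.inr (Q.step x i)) :=
  Or.inl ⟨x, i, rfl, rfl⟩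

lemma exists_private_sink (hT : Q.graph.IsTree) (F : Finset Q.Src) (hF : F.Nonempty)
    (A : Finset (Fin r)) (hA : A.Nonempty) :
    ∃ x ∈ F, ∃ i₀ ∈ A, ∀ i ∈ A, Q.back (Q.step x i₀) i ∈ F → i = i₀ := by
  obtain ⟨x₀, -⟩ := id hF
  set z : Q.Src ⊕ Q.Snk := Sum.inl x₀
  obtain ⟨x, hx, hmax⟩ := F.exists_max_image (fun x => Q.graph.dist z (Sum.inl x)) hF
  by_cases hfar : ∃ i₀ ∈ A, Q.graph.dist z (Sum.inl x) ≤ Q.graph.dist z (Sum.inr (Q.step x i₀))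
  · obtain ⟨i₀, hi₀, hfar⟩ := hfar
    refine ⟨x, hx, i₀, hi₀, fun i _ hi => Q.step_inj x ?_⟩
    have hy : Q.graph.dist z (Sum.inr (Q.step x i₀)) = Q.graph.dist z (Sum.inl x) + 1 := by
      have := hT.dist_eq_dist_add_one_of_adj z (Q.graph_adj_step x i₀)
      omega
    have hadj : Q.graph.Adj (Sum.inr (Q.step x i₀)) (Sum.inl (Q.back (Q.step x i₀) i)) := by
      simpa only [Q.step_back] using (Q.graph_adj_step (Q.back (Q.step x i₀) i) i).symm
    have hback : Q.back (Q.step x i₀) i = x := Sum.inl_injective <|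
      hT.eq_of_adj_of_dist_lt (z := z) hadj (Q.graph_adj_step x i₀).symm
        (by have := hmax _ hi; omega) (by omega)
    calc Q.step x i = Q.step (Q.back (Q.step x i₀) i) i := by rw [hback]
      _ = Q.step x i₀ := Q.step_back _ i
  · push Not at hfar
    obtain ⟨i₀, hi₀⟩ := hA
    refine ⟨x, hx, i₀, hi₀, fun i hi _ => Q.step_inj x (Sum.inr_injective (α := Q.Src) ?_)⟩
    exact hT.eq_of_adj_of_dist_lt (Q.graph_adj_step x i) (Q.graph_adj_step x i₀)
      (hfar i hi) (hfar i₀ hi₀)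

end BipData

lemma KRep.map_injective_of_EKP {k : Type} [Field k] {r : ℕ} {N : KRep k r} (h : N.EKP)
    (i : Fin r) : Function.Injective ⇑(N.map i) := by
  classical
  simpa [Pi.single_apply] using h (Pi.single i 1) (by simp)

namespace CrRep

variable {k : Type} [Field k] {r : ℕ} {Q : CrQuiver r} (M : CrRep k Q)

lemma pushMap_of [DecidableEq Q.Src] [DecidableEq Q.Snk] (i : Fin r) (x : Q.Src) (u : M.Vs x) :
    M.pushMap i (DirectSum.of _ x u) = DirectSum.of _ (Q.step x i) (M.map x i u) := by
  rw [← DirectSum.lof_eq_of k, ← DirectSum.lof_eq_of k, pushMap]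
  exact (DirectSum.toModule_lof k x u).trans <| by
    rw [LinearMap.comp_apply]
    congr
    exact Subsingleton.elim _ _

lemma pushMap_apply_step (i : Fin r) (v : ⨁ x, M.Vs x) (x : Q.Src) :
    M.pushMap i v (Q.step x i) = M.map x i (v x) := by
  classical
  induction v using DirectSum.induction_on with
  | zero => simp
  | of x' u =>
    rw [pushMap_of]
    by_cases hx : x' = x
    · subst hx
      rw [DirectSum.of_eq_same, DirectSum.of_eq_same]
    · have hne : Q.step x' i ≠ Q.step x i := fun h => hx <| by
        simpa only [Q.back_step] using congrArg (fun y => Q.back y i) h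
      rw [DirectSum.of_eq_of_ne _ _ _ hne.symm, DirectSum.of_eq_of_ne _ _ _ (Ne.symm hx), map_zero]
  | add v w hv hw => simp only [map_add, DirectSum.add_apply, hv, hw]

lemma pushMap_apply_eq_zero {i : Fin r} {v : ⨁ x, M.Vs x} {y : Q.Snk} (h : v (Q.back y i) = 0) :
    M.pushMap i v y = 0 := by
  obtain ⟨x, rfl⟩ : ∃ x, Q.step x i = y := ⟨_, Q.step_back y i⟩
  rw [pushMap_apply_step, ← Q.back_step x i, h, map_zero]

lemma map_injective_of_pushMap_injective {i : Fin r} (h : Function.Injective (M.pushMap i))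
    (x : Q.Src) : Function.Injective (M.map x i) := by
  classical
  refine (injective_iff_map_eq_zero _).2 fun u hu => ?_
  have : DirectSum.of (fun x => M.Vs x) x u = 0 :=
    (injective_iff_map_eq_zero _).1 h _ (by rw [pushMap_of, hu, map_zero])
  simpa using congrArg (· x) this

lemma pushdown_EKP_of_allInj (hM : M.AllInj) : M.pushdown.EKP := by
  classical
  intro α hα
  refine (injective_iff_map_eq_zero _).2 fun (v : ⨁ x, M.Vs x) hv => ?_
  change (∑ i, α i • M.pushMap i) v = 0 at hv
  simp only [LinearMap.sum_apply, LinearMap.smul_apply] at hv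
  by_contra hv0
  obtain ⟨j, hj⟩ := Function.ne_iff.1 hα
  obtain ⟨x, hx, i₀, hi₀, hpriv⟩ := Q.exists_private_sink Q.isTree v.support
    (Finset.nonempty_iff_ne_empty.2 (mt DFinsupp.support_eq_empty.1 hv0)) {i | α i ≠ 0}
    ⟨j, by simpa using hj⟩
  have hterm : ∀ i ≠ i₀, α i • M.pushMap i v (Q.step x i₀) = 0 := by
    intro i hi
    by_cases hαi : α i = 0
    · rw [hαi, zero_smul]
    · refine smul_eq_zero_of_right _ (M.pushMap_apply_eq_zero ?_)
      exact DFinsupp.notMem_support_iff.1 fun hmem => hi (hpriv i (by simpa using hαi) hmem)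
  have hx₀ : α i₀ • M.map x i₀ (v x) = 0 := by
    have hy := congrArg (· (Q.step x i₀)) hv
    simp only [DirectSum.sum_apply, DirectSum.smul_apply, DirectSum.zero_apply] at hy
    rwa [Finset.sum_eq_single i₀ (fun i _ => hterm i) (by simp), M.pushMap_apply_step] at hy
  have hi₀ : α i₀ ≠ 0 := by simpa using hi₀
  exact DFinsupp.mem_support_iff.1 hx <|
    (injective_iff_map_eq_zero _).1 (hM x i₀) _ ((smul_eq_zero.1 hx₀).resolve_left hi₀)

end CrRep

theorem statement1_general {k : Type} [Field k] {r : ℕ}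
    (Q : CrQuiver r) (M : CrRep k Q) :
    List.TFAE [M.pushdown.EKP,
      ∀ i : Fin r, Function.Injective ⇑(M.pushdown.map i),
      M.AllInj] := by
  tfae_have 1 → 2 := KRep.map_injective_of_EKP
  tfae_have 2 → 3 := fun h x i => M.map_injective_of_pushMap_injective (h i) x
  tfae_have 3 → 1 := M.pushdown_EKP_of_allInj
  tfae_finish

theorem statement1 {k : Type} [Field k] [IsAlgClosed k] {r : ℕ} (hr : 3 ≤ r)
    (Q : CrQuiver r) (M : CrRep k Q) (hM : M.Indec) :
    List.TFAE [M.pushdown.EKP,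
      ∀ i : Fin r, Function.Injective ⇑(M.pushdown.map i),
      M.AllInj] :=
  statement1_general Q M
end

section
/- Let M ∈ rep(C_r) be an indecomposable representation of the universal covering quiver C_r of Γ_r (r ≥ 3) and set N := π_λ(M). Then the following are equivalent: (a) N has the equal images property; (b) N(γ_i) is surjective for all i ∈ {1,…,r}; (c) M ∈ Sur, i.e. M(δ) is surjective for every arrow δ of C_r. -/
open DirectSum

/-!
(a) ⇒ (b) is the case `α = e_i`, and (b) ⇒ (c) holds because `π_λ(M)(γ_i)` is the direct sum
of the maps `M(β)` over the arrows `β` over `γ_i`, whose targets are pairwise distinct.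

For (c) ⇒ (a), let `ψ` be a linear form on `π_λ(M)_2` vanishing on the image of `π_λ(M)^α`,
with components `ψ_y` at the sinks `y`. Let `F` be the finite set of sinks with `ψ_y ≠ 0` and
`X` the set of sources joined to `F` by an arrow `γ_i` with `α_i ≠ 0`. At a source `x ∈ X` the
relation `Σ_i α_i ψ_{t(x,i)} ∘ M(x,i) = 0` and surjectivity of `M(x,i)` give a second sink of `F`
adjacent to `x`, and every sink of `F` has two neighbours in `X` as `α ≠ 0`. A finite nonempty
set of vertices of a tree cannot have every vertex with two neighbours in it, so `F = ∅`, i.e.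
`ψ = 0`.
-/

theorem KRep.EIP.surjective_map {k : Type} [Field k] {r : ℕ} {N : KRep k r} (h : N.EIP)
    (i : Fin r) : Function.Surjective ⇑(N.map i) := by
  have := h (Pi.single i 1) (Pi.single_ne_zero_iff.mpr one_ne_zero)
  rwa [Finset.sum_eq_single_of_mem i (Finset.mem_univ i) fun j _ hj => by
    rw [Pi.single_eq_of_ne hj, zero_smul], Pi.single_eq_same, one_smul] at this

namespace SimpleGraph

variable {V : Type*} {G : SimpleGraph V}

/-- An endpoint of a longest path is a leaf (or an isolated vertex): a neighbour off the path
would extend it, and a neighbour on the path must be its second vertex since `G` is acyclic. -/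
theorem IsAcyclic.exists_neighborSet_subsingleton [Finite V] [Nonempty V] (hG : G.IsAcyclic) :
    ∃ v, (G.neighborSet v).Subsingleton := by
  obtain ⟨u, v, p, hp, hmax⟩ := Walk.exists_isPath_forall_isPath_length_le_length G
  refine ⟨u, fun w hw w' hw' => ?_⟩
  have mem_support : ∀ w, G.Adj u w → w ∈ p.support := fun w hadj => by
    by_contra hw
    have := hmax w v (p.cons hadj.symm) (hp.cons hw)
    simp only [Walk.length_cons] at this
    omega
  rw [hG.eq_snd_of_adj_start hp hw (mem_support w hw),
    hG.eq_snd_of_adj_start hp hw' (mem_support w' hw')]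

theorem IsAcyclic.exists_mem_neighborSet_inter_subsingleton (hG : G.IsAcyclic) {S : Set V}
    (hS : S.Finite) (hne : S.Nonempty) : ∃ v ∈ S, (G.neighborSet v ∩ S).Subsingleton := by
  have : Finite S := hS
  have : Nonempty S := hne.to_subtype
  obtain ⟨⟨v, hv⟩, hsub⟩ := (hG.induce S).exists_neighborSet_subsingleton
  refine ⟨v, hv, fun w ⟨hw, hwS⟩ w' ⟨hw', hw'S⟩ => ?_⟩
  exact congrArg Subtype.val (hsub (show (G.induce S).Adj ⟨v, hv⟩ ⟨w, hwS⟩ from hw)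
    (show (G.induce S).Adj ⟨v, hv⟩ ⟨w', hw'S⟩ from hw'))

end SimpleGraph

theorem BipData.graph_adj_step_s2 {r : ℕ} (Q : BipData r) (x : Q.Src) (i : Fin r) :
    Q.graph.Adj (Sum.inl x) (Sum.inr (Q.step x i)) :=
  Or.inl ⟨x, i, rfl, rfl⟩

theorem BipData.graph_adj_back {r : ℕ} (Q : BipData r) (y : Q.Snk) (i : Fin r) :
    Q.graph.Adj (Sum.inr y) (Sum.inl (Q.back y i)) := by
  simpa only [Q.step_back] using (Q.graph_adj_step_s2 (Q.back y i) i).symm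

namespace CrRep

variable {k : Type} [Field k] {r : ℕ} {Q : CrQuiver r}

section Annihilator

variable {M : CrRep k Q} {α : Fin r → k} {ψ : ∀ y, Module.Dual k (M.Vt y)}

theorem exists_ne_of_annihilates (hs : M.AllSur)
    (hψ : ∀ x v, ∑ i, α i * ψ (Q.step x i) (M.map x i v) = 0)
    {x : Q.Src} {i : Fin r} (hαi : α i ≠ 0) (hψi : ψ (Q.step x i) ≠ 0) :
    ∃ j ≠ i, α j ≠ 0 ∧ ψ (Q.step x j) ≠ 0 := by
  by_contra! hcon
  obtain ⟨w, hw⟩ := DFunLike.ne_iff.mp hψi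
  obtain ⟨v, rfl⟩ := hs x i w
  have hsum := hψ x v
  rw [Finset.sum_eq_single_of_mem i (Finset.mem_univ i) fun j _ hji => by
    rcases eq_or_ne (α j) 0 with hαj | hαj
    · rw [hαj, zero_mul]
    · rw [hcon j hji hαj, LinearMap.zero_apply, mul_zero]] at hsum
  exact mul_ne_zero hαi hw hsum

theorem eq_zero_of_annihilates (hs : M.AllSur) (hα : α ≠ 0)
    (hψ : ∀ x v, ∑ i, α i * ψ (Q.step x i) (M.map x i v) = 0)
    (hfin : {y | ψ y ≠ 0}.Finite) : ψ = 0 := by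
  by_contra hψ0
  set F := {y | ψ y ≠ 0}
  set X := {x | ∃ y ∈ F, ∃ i, α i ≠ 0 ∧ x = Q.back y i}
  have hXfin : X.Finite := by
    refine ((hfin.prod (Set.finite_univ (α := Fin r))).image
      fun p => Q.back p.1 p.2).subset ?_
    rintro x ⟨y, hy, i, -, rfl⟩
    exact ⟨(y, i), ⟨hy, Set.mem_univ i⟩, rfl⟩
  have hFne : F.Nonempty := by
    by_contra! hF
    exact hψ0 (funext fun y => by_contra fun hy => hF.subset hy)
  have two_neighbours : ∀ v ∈ Sum.inl '' X ∪ Sum.inr '' F,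
      ¬ (Q.graph.neighborSet v ∩ (Sum.inl '' X ∪ Sum.inr '' F)).Subsingleton := by
    rintro v (⟨x, ⟨y, hy, i, hαi, rfl⟩, rfl⟩ | ⟨y, hy, rfl⟩)
    · have hψi : ψ (Q.step (Q.back y i) i) ≠ 0 := by rwa [Q.step_back]
      obtain ⟨j, hji, hαj, hψj⟩ := exists_ne_of_annihilates hs hψ hαi hψi
      intro hsub
      refine hji (Q.step_inj _ (Sum.inr_injective (hsub ⟨Q.graph_adj_step_s2 _ j, ?_⟩
        ⟨Q.graph_adj_step_s2 _ i, ?_⟩)))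
      · exact Or.inr ⟨_, hψj, rfl⟩
      · exact Or.inr ⟨_, hψi, rfl⟩
    · obtain ⟨i, hαi⟩ := Function.ne_iff.mp hα
      have hψi : ψ (Q.step (Q.back y i) i) ≠ 0 := by rwa [Q.step_back]
      obtain ⟨j, hji, hαj, -⟩ := exists_ne_of_annihilates hs hψ hαi hψi
      intro hsub
      exact hji (Q.back_inj y (Sum.inl_injective (hsub ⟨Q.graph_adj_back y j,
        Or.inl ⟨_, ⟨y, hy, j, hαj, rfl⟩, rfl⟩⟩ ⟨Q.graph_adj_back y i,
        Or.inl ⟨_, ⟨y, hy, i, hαi, rfl⟩, rfl⟩⟩)))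
  obtain ⟨v, hv, hsub⟩ := Q.isTree.isAcyclic.exists_mem_neighborSet_inter_subsingleton
    ((hXfin.image _).union (hfin.image _)) (hFne.image _ |>.inr)
  exact two_neighbours v hv hsub

end Annihilator

open scoped Classical in
@[simp]
theorem pushMap_lof (M : CrRep k Q) (i : Fin r) (x : Q.Src) (v : M.Vs x) :
    M.pushMap i (lof k Q.Src (fun x => M.Vs x) x v)
      = lof k Q.Snk (fun y => M.Vt y) (Q.step x i) (M.map x i v) := by
  simp [pushMap, toModule_lof]

theorem component_pushMap (M : CrRep k Q) (i : Fin r) (x : Q.Src) (u : ⨁ x, M.Vs x) :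
    component k Q.Snk (fun y => M.Vt y) (Q.step x i) (M.pushMap i u)
      = M.map x i (component k Q.Src (fun x => M.Vs x) x u) := by
  classical
  induction u using DirectSum.induction_on with
  | zero => simp
  | of x' v =>
    rw [← lof_eq_of k, pushMap_lof]
    rcases eq_or_ne x' x with rfl | hx
    · rw [component.lof_self, component.lof_self]
    · have hstep : Q.step x' i ≠ Q.step x i := fun h =>
        hx (by rw [← Q.back_step x' i, h, Q.back_step])
      simp only [component.of, dif_neg hstep, dif_neg hx, map_zero]
  | add u u' hu hu' => simp only [map_add, hu, hu']

theorem allSur_of_surjective_pushMap (M : CrRep k Q)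
    (h : ∀ i, Function.Surjective ⇑(M.pushMap i)) : M.AllSur := by
  intro x i w
  classical
  obtain ⟨u, hu⟩ := h i (lof k Q.Snk (fun y => M.Vt y) (Q.step x i) w)
  refine ⟨component k Q.Src (fun x => M.Vs x) x u, ?_⟩
  rw [← component_pushMap, hu, component.lof_self]

theorem AllSur.pushdown_EIP {M : CrRep k Q} (hs : M.AllSur) : M.pushdown.EIP := by
  classical
  intro α hα
  change Function.Surjective ⇑(∑ i, α i • M.pushMap i)
  rw [← LinearMap.range_eq_top]
  by_contra hne
  obtain ⟨φ, hφ0, hφ⟩ :=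
    Submodule.exists_dual_map_eq_bot_of_lt_top (lt_top_iff_ne_top.mpr hne) inferInstance
  set ψ : ∀ y, Module.Dual k (M.Vt y) := fun y => φ ∘ₗ lof k Q.Snk (fun y => M.Vt y) y
  have hψ : ∀ x v, ∑ i, α i * ψ (Q.step x i) (M.map x i v) = 0 := fun x v => by
    have := (Submodule.eq_bot_iff _).mp hφ _ (Submodule.mem_map_of_mem
      (LinearMap.mem_range_self _ (lof k Q.Src (fun x => M.Vs x) x v)))
    simpa [ψ, map_sum] using this
  have hfin : {y | ψ y ≠ 0}.Finite := by
    refine (M.finSupp.preimage Sum.inr_injective.injOn).subset fun y hy => ?_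
    obtain ⟨v, hv⟩ := DFunLike.ne_iff.mp hy
    exact ⟨v, fun h => hv (by simp [h])⟩
  exact hφ0 (DirectSum.linearMap_ext k fun y =>
    congrFun (eq_zero_of_annihilates hs hα hψ hfin) y)

end CrRep

theorem statement2_general {k : Type} [Field k] {r : ℕ}
    (Q : CrQuiver r) (M : CrRep k Q) :
    List.TFAE [M.pushdown.EIP,
      ∀ i : Fin r, Function.Surjective ⇑(M.pushdown.map i),
      M.AllSur] := by
  tfae_have 1 → 2 := KRep.EIP.surjective_map
  tfae_have 2 → 3 := M.allSur_of_surjective_pushMap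
  tfae_have 3 → 1 := CrRep.AllSur.pushdown_EIP
  tfae_finish

theorem statement2 {k : Type} [Field k] [IsAlgClosed k] {r : ℕ} (hr : 3 ≤ r)
    (Q : CrQuiver r) (M : CrRep k Q) (hM : M.Indec) :
    List.TFAE [M.pushdown.EIP,
      ∀ i : Fin r, Function.Surjective ⇑(M.pushdown.map i),
      M.AllSur] :=
  statement2_general Q M
end

section
/- Let M ∈ rep(C_r) (r ≥ 3) be S_r-stable. Then there is a vertex c ∈ supp(M) such that: (a) σ ∘ g_σ(c) = c for all σ ∈ S_r; (b) for each n ∈ ℕ, the number r divides D(n, c) := Σ_{x ∈ supp(M), d(x,c) = n} dim_k M_x. -/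
open DirectSum

/-!
Indecomposability makes `supp M` path-convex in the tree `C_r`, so the vertices of `supp M`
of minimal eccentricity within `supp M` (its centre) are one vertex or two adjacent ones.
The automorphism `Φ σ` preserves `supp M`, hence its centre, and it preserves the
bipartition, so it fixes a central vertex `c`. It permutes the `r` neighbours of `c` as `σ`
permutes the arrow labels, so it maps the part of the sphere of radius `n ≥ 1` around `c`
lying behind the `i`-th neighbour onto the part behind the `σ i`-th one, preserving
dimensions; hence the `r` parts have equal total dimension.
-/

lemma card_dvd_sum_of_forall_perm {ι R : Type*} [Fintype ι] [Semiring R] (F : ι → R)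
    (hF : ∀ (σ : Equiv.Perm ι) (i : ι), F (σ i) = F i) : (Fintype.card ι : R) ∣ ∑ i, F i := by
  classical
  rcases isEmpty_or_nonempty ι with hι | ⟨⟨i₀⟩⟩
  · simp
  · have hconst : ∀ i, F i = F i₀ := fun i => by simpa using hF (Equiv.swap i₀ i) i₀
    simp only [hconst, Finset.sum_const, Finset.card_univ, nsmul_eq_mul]
    exact dvd_mul_right _ _

namespace SimpleGraph

variable {V W : Type*} {G : SimpleGraph V} {G' : SimpleGraph W}

def PathConvex (G : SimpleGraph V) (S : Set V) : Prop :=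
  ∀ ⦃a b⦄, a ∈ S → b ∈ S → ∀ p : G.Walk a b, p.IsPath → ∀ z ∈ p.support, z ∈ S

lemma Hom.edist_apply_le (f : G →g G') (u v : V) : G'.edist (f u) (f v) ≤ G.edist u v :=
  le_iInf fun p => (SimpleGraph.edist_le (p.map f)).trans (by rw [Walk.length_map])

lemma Iso.dist_apply (φ : G ≃g G') (u v : V) : G'.dist (φ u) (φ v) = G.dist u v := by
  have hle : G'.edist (φ u) (φ v) ≤ G.edist u v := φ.toHom.edist_apply_le u v
  have hge : G.edist u v ≤ G'.edist (φ u) (φ v) := by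
    simpa using φ.symm.toHom.edist_apply_le (φ u) (φ v)
  rw [dist, dist, le_antisymm hle hge]

lemma Connected.exists_adj_dist_add_one_eq (hG : G.Connected) {z c : V} (hne : z ≠ c) :
    ∃ w, G.Adj c w ∧ G.dist z w + 1 = G.dist z c := by
  obtain ⟨p, -, hp⟩ := hG.exists_path_of_dist c z
  have hnil : ¬ p.Nil := fun h => hne h.eq.symm
  refine ⟨p.snd, p.adj_snd hnil, le_antisymm ?_ ?_⟩
  · have := dist_le p.tail
    have := p.length_tail_add_one hnil
    rw [dist_comm (u := z), dist_comm (u := z)]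
    omega
  · have := hG.dist_triangle (u := z) (v := p.snd) (w := c)
    have := dist_eq_one_iff_adj.mpr (p.adj_snd hnil).symm
    omega

lemma IsTree.mem_support_of_dist_add_one_eq (hG : G.IsTree) {z c w : V}
    {p : G.Walk z c} (hp : p.IsPath) (hadj : G.Adj w c) (hw : G.dist z w + 1 = G.dist z c) :
    w ∈ p.support := by
  obtain ⟨q, -, hq⟩ := hG.connected.exists_path_of_dist z w
  have hqc : (q.concat hadj).IsPath := by
    apply Walk.isPath_of_length_eq_dist
    rw [Walk.length_concat, hq, hw]
  have hpq : q.concat hadj = p :=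
    congrArg Subtype.val (hG.isAcyclic.subsingleton_path z c |>.elim ⟨_, hqc⟩ ⟨p, hp⟩)
  simp [← hpq, Walk.support_concat]

lemma IsTree.eq_of_adj_of_dist_add_one_eq (hG : G.IsTree) {z c w w' : V}
    (hw : G.Adj c w) (hw' : G.Adj c w') (hdw : G.dist z w + 1 = G.dist z c)
    (hdw' : G.dist z w' + 1 = G.dist z c) : w = w' := by
  obtain ⟨p, hp, -⟩ := hG.connected.exists_path_of_dist z c
  rw [hG.isAcyclic.eq_penultimate_of_adj_end hp hw
      (hG.mem_support_of_dist_add_one_eq hp hw.symm hdw),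
    hG.isAcyclic.eq_penultimate_of_adj_end hp hw'
      (hG.mem_support_of_dist_add_one_eq hp hw'.symm hdw')]

lemma IsAcyclic.mem_support_or_mem_support (hG : G.IsAcyclic) {u v a w : V}
    {p : G.Walk u v} (hp : p.IsPath) (P : G.Walk a u) (Q : G.Walk a v) (hw : w ∈ p.support) :
    w ∈ P.support ∨ w ∈ Q.support := by
  classical
  have hbyp : (P.reverse.append Q).bypass = p :=
    congrArg Subtype.val (hG.subsingleton_path u v |>.elim ⟨_, Walk.bypass_isPath _⟩ ⟨p, hp⟩)
  have := (P.reverse.append Q).support_bypass_subset_support (hbyp ▸ hw)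
  simpa [Walk.mem_support_append_iff, Walk.support_reverse] using this

lemma IsTree.dist_lt_max_of_mem_support (hG : G.IsTree) {u v w : V} {p : G.Walk u v}
    (hp : p.IsPath) (hw : w ∈ p.support) (hwu : w ≠ u) (hwv : w ≠ v) (a : V) :
    G.dist a w < max (G.dist a u) (G.dist a v) := by
  classical
  obtain ⟨P, -, hP⟩ := hG.connected.exists_path_of_dist a u
  obtain ⟨Q, -, hQ⟩ := hG.connected.exists_path_of_dist a v
  rcases hG.isAcyclic.mem_support_or_mem_support hp P Q hw with h | h
  · exact lt_max_of_lt_left (hP ▸ (dist_le _).trans_lt (Walk.length_takeUntil_lt_length h hwu))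
  · exact lt_max_of_lt_right (hQ ▸ (dist_le _).trans_lt (Walk.length_takeUntil_lt_length h hwv))

lemma IsTree.eq_or_adj_of_isMinOn (hG : G.IsTree) {S : Finset V} (hS : G.PathConvex S)
    {u v : V} (hu : u ∈ S) (hv : v ∈ S) (hmu : IsMinOn (fun x => S.sup (G.dist x)) S u)
    (hmv : IsMinOn (fun x => S.sup (G.dist x)) S v) : u = v ∨ G.Adj u v := by
  -- otherwise the second vertex of the path from `u` to `v` has smaller eccentricity
  by_contra! h
  obtain ⟨p, hp, -⟩ := hG.connected.exists_path_of_dist u v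
  have hnil : ¬ p.Nil := fun hn => h.1 hn.eq
  have hw : p.snd ∈ p.support := p.getVert_mem_support 1
  have hwS : p.snd ∈ S := hS hu hv p hp _ hw
  obtain ⟨a, ha, hwa⟩ := S.exists_mem_eq_sup ⟨u, hu⟩ (G.dist p.snd)
  have hlt := hG.dist_lt_max_of_mem_support hp hw
    (p.adj_snd hnil).ne' (fun e => h.2 (e ▸ p.adj_snd hnil)) a
  have hau : G.dist u a ≤ S.sup (G.dist u) := Finset.le_sup ha
  have hav : G.dist v a ≤ S.sup (G.dist v) := Finset.le_sup ha
  have hmu' : S.sup (G.dist u) ≤ S.sup (G.dist p.snd) := isMinOn_iff.mp hmu _ hwS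
  have hmv' : S.sup (G.dist v) ≤ S.sup (G.dist p.snd) := isMinOn_iff.mp hmv _ hwS
  rw [dist_comm (u := a), dist_comm (u := a), dist_comm (u := a)] at hlt
  omega

lemma IsTree.apply_eq_of_isMinOn (hG : G.IsTree) {S : Finset V} (hS : G.PathConvex S)
    (φ : G ≃g G) (hφS : ∀ z, φ z ∈ S ↔ z ∈ S) {c : V} (hφc : ¬ G.Adj c (φ c)) (hc : c ∈ S)
    (hmin : IsMinOn (fun x => S.sup (G.dist x)) S c) : φ c = c := by
  have hecc : S.sup (G.dist (φ c)) ≤ S.sup (G.dist c) := by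
    refine Finset.sup_le fun a ha => ?_
    rw [← φ.apply_symm_apply a, φ.dist_apply]
    exact Finset.le_sup ((hφS _).mp (by rwa [φ.apply_symm_apply]))
  have hmin' : IsMinOn (fun x => S.sup (G.dist x)) S (φ c) :=
    isMinOn_iff.mpr fun x hx => hecc.trans (isMinOn_iff.mp hmin x hx)
  exact ((hG.eq_or_adj_of_isMinOn hS hc ((hφS c).mpr hc) hmin hmin').resolve_right hφc).symm

/-- `z` lies behind the neighbour `nbr i` of `c` iff `G.dist z (nbr i) + 1 = G.dist z c`. -/
lemma IsTree.sum_sphere_eq_sum_branch {β : Type*} [AddCommMonoid β] (hG : G.IsTree)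
    {ι : Type*} [Fintype ι] {c : V} {nbr : ι → V} (hinj : Function.Injective nbr)
    (hadj : ∀ i, G.Adj c (nbr i)) (hall : ∀ w, G.Adj c w → ∃ i, nbr i = w)
    (S : Finset V) (f : V → β) {n : ℕ} (hn : n ≠ 0) :
    ∑ z ∈ S with G.dist z c = n, f z
      = ∑ i, ∑ z ∈ S with G.dist z c = n ∧ G.dist z (nbr i) + 1 = n, f z := by
  classical
  rw [← Finset.sum_biUnion]
  · congr 1
    ext z
    simp only [Finset.mem_filter, Finset.mem_biUnion, Finset.mem_univ, true_and]
    refine ⟨fun ⟨hzS, hz⟩ => ?_, fun ⟨_, hzS, hz, _⟩ => ⟨hzS, hz⟩⟩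
    have hzc : z ≠ c := by rintro rfl; simp at hz; omega
    obtain ⟨w, hcw, hw⟩ := hG.connected.exists_adj_dist_add_one_eq hzc
    obtain ⟨i, rfl⟩ := hall w hcw
    exact ⟨i, hzS, hz, hz ▸ hw⟩
  · intro i _ j _ hij
    refine Finset.disjoint_left.mpr fun z hi hj => hij (hinj ?_)
    simp only [Finset.mem_filter] at hi hj
    exact hG.eq_of_adj_of_dist_add_one_eq (hadj i) (hadj j) (hi.2.2.trans hi.2.1.symm)
      (hj.2.2.trans hj.2.1.symm)

lemma Iso.sum_branch_apply {β : Type*} [AddCommMonoid β] (φ : G ≃g G) {S : Finset V}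
    (hφS : ∀ z, φ z ∈ S ↔ z ∈ S) {f : V → β} (hf : ∀ z, f (φ z) = f z) (c w : V) (n : ℕ) :
    ∑ z ∈ S with G.dist z (φ c) = n ∧ G.dist z (φ w) + 1 = n, f z
      = ∑ z ∈ S with G.dist z c = n ∧ G.dist z w + 1 = n, f z := by
  refine (Finset.sum_equiv φ.toEquiv (fun z => ?_) (fun z _ => (hf z).symm)).symm
  simp [hφS, φ.dist_apply]

theorem IsTree.card_dvd_sum_sphere {R : Type*} [Semiring R] (hG : G.IsTree)
    {ι : Type*} [Fintype ι] {c : V} {nbr : ι → V} (hinj : Function.Injective nbr)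
    (hadj : ∀ i, G.Adj c (nbr i)) (hall : ∀ w, G.Adj c w → ∃ i, nbr i = w)
    {S : Finset V} {f : V → R}
    (hsymm : ∀ σ : Equiv.Perm ι, ∃ φ : G ≃g G, φ c = c ∧ (∀ i, φ (nbr i) = nbr (σ i)) ∧
      (∀ z, φ z ∈ S ↔ z ∈ S) ∧ ∀ z, f (φ z) = f z)
    {n : ℕ} (hn : n ≠ 0) :
    (Fintype.card ι : R) ∣ ∑ z ∈ S with G.dist z c = n, f z := by
  rw [hG.sum_sphere_eq_sum_branch hinj hadj hall S f hn]
  refine card_dvd_sum_of_forall_perm _ fun σ i => ?_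
  obtain ⟨φ, hφc, hφnbr, hφS, hf⟩ := hsymm σ
  rw [← hφnbr, ← hφc, φ.sum_branch_apply hφS hf, hφc]

end SimpleGraph

namespace BipData

variable {r : ℕ} (Q : BipData r)

def nbr : Q.Src ⊕ Q.Snk → Fin r → Q.Src ⊕ Q.Snk
  | .inl x, i => .inr (Q.step x i)
  | .inr y, i => .inl (Q.back y i)

lemma graph_adj_inl_inr {x : Q.Src} {y : Q.Snk} :
    Q.graph.Adj (.inl x) (.inr y) ↔ ∃ i, Q.step x i = y := by
  simp [graph, eq_comm]

lemma not_graph_adj_inl_inl (x x' : Q.Src) : ¬ Q.graph.Adj (.inl x) (.inl x') := by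
  simp [graph]

lemma not_graph_adj_inr_inr (y y' : Q.Snk) : ¬ Q.graph.Adj (.inr y) (.inr y') := by
  simp [graph]

lemma nbr_injective (z : Q.Src ⊕ Q.Snk) : Function.Injective (Q.nbr z) := by
  cases z with
  | inl x => exact fun i j h => Q.step_inj x (Sum.inr.inj h)
  | inr y => exact fun i j h => Q.back_inj y (Sum.inl.inj h)

lemma graph_adj_nbr (z : Q.Src ⊕ Q.Snk) (i : Fin r) : Q.graph.Adj z (Q.nbr z i) := by
  cases z with
  | inl x => exact (Q.graph_adj_inl_inr).mpr ⟨i, rfl⟩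
  | inr y => exact ((Q.graph_adj_inl_inr).mpr ⟨i, Q.step_back y i⟩).symm

lemma exists_nbr_eq_of_adj {z w : Q.Src ⊕ Q.Snk} (h : Q.graph.Adj z w) : ∃ i, Q.nbr z i = w := by
  rcases z with x | y <;> rcases w with x' | y'
  · exact absurd h (Q.not_graph_adj_inl_inl x x')
  · obtain ⟨i, rfl⟩ := (Q.graph_adj_inl_inr).mp h
    exact ⟨i, rfl⟩
  · obtain ⟨i, rfl⟩ := (Q.graph_adj_inl_inr).mp h.symm
    exact ⟨i, congrArg Sum.inl (Q.back_step x' i)⟩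
  · exact absurd h (Q.not_graph_adj_inr_inr y y')

end BipData

namespace CrPermAut

variable {r : ℕ} {Q : CrQuiver r} {σ : Equiv.Perm (Fin r)} (φ : CrPermAut Q σ)

lemma exists_step_eq_iff (x : Q.Src) (y : Q.Snk) :
    (∃ i, Q.step (φ.es x) i = φ.et y) ↔ ∃ i, Q.step x i = y := by
  constructor
  · rintro ⟨i, h⟩
    refine ⟨σ.symm i, φ.et.injective ?_⟩
    rw [← φ.comm, Equiv.apply_symm_apply, h]
  · rintro ⟨i, rfl⟩
    exact ⟨σ i, φ.comm x i⟩

def toGraphIso : Q.graph ≃g Q.graph where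
  toEquiv := φ.onV
  map_rel_iff' {a b} := by
    rcases a with x | y <;> rcases b with x' | y' <;>
      simp only [onV, Equiv.sumCongr_apply, Sum.map_inl, Sum.map_inr,
        Q.not_graph_adj_inl_inl, Q.not_graph_adj_inr_inr]
    · rw [Q.graph_adj_inl_inr, Q.graph_adj_inl_inr, φ.exists_step_eq_iff]
    · rw [Q.graph.adj_comm, Q.graph_adj_inl_inr, Q.graph.adj_comm, Q.graph_adj_inl_inr,
        φ.exists_step_eq_iff]

@[simp]
lemma toGraphIso_apply (z : Q.Src ⊕ Q.Snk) : φ.toGraphIso z = φ.onV z := rfl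

lemma onV_nbr (z : Q.Src ⊕ Q.Snk) (i : Fin r) :
    φ.onV (Q.nbr z i) = Q.nbr (φ.onV z) (σ i) := by
  cases z with
  | inl x => exact congrArg Sum.inr (φ.comm x i).symm
  | inr y =>
    have h := φ.comm (Q.back y i) i
    rw [Q.step_back] at h
    show Sum.inl (φ.es (Q.back y i)) = Sum.inl (Q.back (φ.et y) (σ i))
    rw [← h, Q.back_step]

lemma not_adj_onV (z : Q.Src ⊕ Q.Snk) : ¬ Q.graph.Adj z (φ.onV z) := by
  cases z with
  | inl x => exact Q.not_graph_adj_inl_inl _ _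
  | inr y => exact Q.not_graph_adj_inr_inr _ _

end CrPermAut

namespace CrRep

variable {k : Type} [Field k] {r : ℕ} {Q : CrQuiver r} {M : CrRep k Q}

lemma subsingleton_Vs_of_notMem {x : Q.Src} (hx : Sum.inl x ∉ M.suppSet) :
    Subsingleton (M.Vs x) :=
  ⟨fun v w => by simp_all [suppSet]⟩

lemma subsingleton_Vt_of_notMem {y : Q.Snk} (hy : Sum.inr y ∉ M.suppSet) :
    Subsingleton (M.Vt y) :=
  ⟨fun v w => by simp_all [suppSet]⟩

lemma mem_finSupp_toFinset {z : Q.Src ⊕ Q.Snk} : z ∈ M.finSupp.toFinset ↔ z ∈ M.suppSet :=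
  Set.Finite.mem_toFinset _

lemma mem_suppSet_twist {σ : Equiv.Perm (Fin r)} (φ : CrPermAut Q σ) (z : Q.Src ⊕ Q.Snk) :
    z ∈ (M.twist φ).suppSet ↔ φ.onV z ∈ M.suppSet := by
  cases z <;> rfl

lemma dimAt_twist {σ : Equiv.Perm (Fin r)} (φ : CrPermAut Q σ) (z : Q.Src ⊕ Q.Snk) :
    (M.twist φ).dimAt z = M.dimAt (φ.onV z) := by
  cases z <;> rfl

open Classical in
noncomputable def proj (M : CrRep k Q) (P : Set (Q.Src ⊕ Q.Snk))
    (hP : ∀ a b, Q.graph.Adj a b → a ∈ P → b ∉ P → b ∉ M.suppSet) : CrHom M M where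
  fs x := if Sum.inl x ∈ P then LinearMap.id else 0
  ft y := if Sum.inr y ∈ P then LinearMap.id else 0
  comm x i := by
    have hadj : Q.graph.Adj (.inl x) (.inr (Q.step x i)) := (Q.graph_adj_inl_inr).mpr ⟨i, rfl⟩
    by_cases hx : Sum.inl x ∈ P <;> by_cases hy : Sum.inr (Q.step x i) ∈ P <;>
      simp only [hx, hy, if_true, if_false, LinearMap.id_comp, LinearMap.comp_id,
        LinearMap.zero_comp, LinearMap.comp_zero]
    · have := subsingleton_Vt_of_notMem (hP _ _ hadj hx hy)
      exact Subsingleton.elim _ _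
    · have := subsingleton_Vs_of_notMem (hP _ _ hadj.symm hy hx)
      exact Subsingleton.elim _ _

theorem Indec.suppSet_subset_or_disjoint (hM : M.Indec) {P : Set (Q.Src ⊕ Q.Snk)}
    (hP : ∀ a b, Q.graph.Adj a b → a ∈ P → b ∉ P → b ∉ M.suppSet) :
    M.suppSet ⊆ P ∨ Disjoint M.suppSet P := by
  rcases hM.2 (M.proj P hP) (fun x => by simp only [proj]; split_ifs <;> simp)
      (fun y => by simp only [proj]; split_ifs <;> simp) with ⟨hs, ht⟩ | ⟨hs, ht⟩
  · refine Or.inr (Set.disjoint_left.mpr ?_)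
    rintro (x | y) ⟨v, hv⟩ hz
    · exact hv (by simpa [proj, hz] using LinearMap.congr_fun (hs x) v)
    · exact hv (by simpa [proj, hz] using LinearMap.congr_fun (ht y) v)
  · refine Or.inl fun z hz => by_contra fun hzP => ?_
    rcases z with x | y <;> obtain ⟨v, hv⟩ := hz
    · exact hv (by simpa [proj, hzP] using (LinearMap.congr_fun (hs x) v).symm)
    · exact hv (by simpa [proj, hzP] using (LinearMap.congr_fun (ht y) v).symm)

/- If `z ∉ supp M` lay on the path from `a` to `b`, the vertices reachable from `a` avoiding `z`
would carry a proper direct summand of `M`. -/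
theorem Indec.pathConvex_suppSet (hM : M.Indec) : Q.graph.PathConvex M.suppSet := by
  classical
  intro a b ha hb p hp z hzp
  by_contra hzS
  let P : Set (Q.Src ⊕ Q.Snk) := {w | ∃ q : Q.graph.Walk a w, z ∉ q.support}
  have hP : ∀ u w, Q.graph.Adj u w → u ∈ P → w ∉ P → w ∉ M.suppSet := by
    rintro u w huw ⟨q, hq⟩ hw
    obtain rfl : w = z := by
      by_contra hne
      exact hw ⟨q.concat huw, by simp [SimpleGraph.Walk.support_concat, hq, Ne.symm hne]⟩
    exact hzS
  have haP : a ∈ P := ⟨.nil, by simpa using fun h : z = a => hzS (h ▸ ha)⟩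
  rcases hM.suppSet_subset_or_disjoint hP with h | h
  · obtain ⟨q, hq⟩ := h hb
    have hqp : q.bypass = p :=
      congrArg Subtype.val
        (Q.isTree.isAcyclic.subsingleton_path a b |>.elim ⟨_, q.bypass_isPath⟩ ⟨p, hp⟩)
    exact hq (q.support_bypass_subset_support (hqp ▸ hzp))
  · exact Set.disjoint_left.mp h ha haP

end CrRep

namespace CrIso

variable {k : Type} [Field k] {r : ℕ} {Q : CrQuiver r} {M N : CrRep k Q}

lemma suppSet_eq (e : CrIso M N) : M.suppSet = N.suppSet := by
  ext (x | y)
  · exact ⟨fun ⟨v, hv⟩ => ⟨e.es x v, by simpa using hv⟩,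
      fun ⟨v, hv⟩ => ⟨(e.es x).symm v, by simpa using hv⟩⟩
  · exact ⟨fun ⟨v, hv⟩ => ⟨e.et y v, by simpa using hv⟩,
      fun ⟨v, hv⟩ => ⟨(e.et y).symm v, by simpa using hv⟩⟩

lemma dimAt_eq (e : CrIso M N) (z : Q.Src ⊕ Q.Snk) : M.dimAt z = N.dimAt z := by
  cases z with
  | inl x => exact (e.es x).finrank_eq
  | inr y => exact (e.et y).finrank_eq

end CrIso

theorem statement16_general {k : Type} [Field k] {r : ℕ}
    (Q : CrQuiver r) (M : CrRep k Q) (hM : M.Indec)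
    (Φ : ∀ σ : Equiv.Perm (Fin r), CrPermAut Q σ) (hΦ : M.SrStable Φ) :
    ∃ c ∈ M.suppSet,
      (∀ σ : Equiv.Perm (Fin r), (Φ σ).onV c = c) ∧
      (∀ n : ℕ, 1 ≤ n →
        (r : ℕ) ∣ ∑ᶠ z ∈ {z | z ∈ M.suppSet ∧ Q.toBipData.graph.dist z c = n}, M.dimAt z) := by
  classical
  set S := M.finSupp.toFinset
  have hS : Q.graph.PathConvex S := by
    rw [Set.Finite.coe_toFinset]
    exact hM.pathConvex_suppSet
  have hΦS : ∀ σ z, (Φ σ).onV z ∈ S ↔ z ∈ S := fun σ z => by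
    rw [CrRep.mem_finSupp_toFinset, CrRep.mem_finSupp_toFinset, ← CrRep.mem_suppSet_twist,
      ← (hΦ σ).some.suppSet_eq]
  have hΦdim : ∀ σ z, M.dimAt ((Φ σ).onV z) = M.dimAt z := fun σ z => by
    rw [← CrRep.dimAt_twist, (hΦ σ).some.dimAt_eq]
  obtain ⟨c, hcS, hmin⟩ :=
    S.exists_min_image (fun x => S.sup (Q.graph.dist x)) (M.finSupp.toFinset_nonempty.mpr hM.1)
  have hfix : ∀ σ, (Φ σ).onV c = c := fun σ =>
    Q.isTree.apply_eq_of_isMinOn hS (Φ σ).toGraphIso (hΦS σ) ((Φ σ).not_adj_onV c) hcS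
      (isMinOn_iff.mpr hmin)
  refine ⟨c, CrRep.mem_finSupp_toFinset.mp hcS, hfix, fun n hn => ?_⟩
  have hsphere :
      {z | z ∈ M.suppSet ∧ Q.graph.dist z c = n} = ↑(S.filter (Q.graph.dist · c = n)) := by
    ext z
    rw [Finset.coe_filter, Set.mem_ofPred_eq, Set.mem_ofPred_eq, CrRep.mem_finSupp_toFinset]
  rw [hsphere, finsum_mem_coe_finset]
  simpa using Q.isTree.card_dvd_sum_sphere (Q.nbr_injective c) (Q.graph_adj_nbr c)
    (fun _ => Q.exists_nbr_eq_of_adj)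
    (fun σ => ⟨(Φ σ).toGraphIso, hfix σ, fun i => by simp [CrPermAut.onV_nbr, hfix σ], hΦS σ,
      hΦdim σ⟩)
    (by omega : n ≠ 0)

theorem statement16 {k : Type} [Field k] [IsAlgClosed k] {r : ℕ} (hr : 3 ≤ r)
    (Q : CrQuiver r) (M : CrRep k Q) (hM : M.Indec)
    (Φ : ∀ σ : Equiv.Perm (Fin r), CrPermAut Q σ) (hΦ : M.SrStable Φ) :
    ∃ c ∈ M.suppSet,
      (∀ σ : Equiv.Perm (Fin r), (Φ σ).onV c = c) ∧
      (∀ n : ℕ, 1 ≤ n →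
        (r : ℕ) ∣ ∑ᶠ z ∈ {z | z ∈ M.suppSet ∧ Q.toBipData.graph.dist z c = n}, M.dimAt z) :=
  statement16_general Q M hM Φ hΦ
end
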